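/- Let (S,s) be a finite bijective irretractable set-theoretic solution to the Pentagon Equation, with s(x,y) = (x·y, θ_x(y)) and s⁻¹(x,y) = (ψ_y(x), y∘x), let 1 be the unique ·-idempotent with θ_1 = id_S, let A be the set of ·-idempotents and G = {1·x : x ∈ S}. For a ∈ A define σ_a : G → G by σ_a(x) = 1·θ_a(x), and for x ∈ G define σ'_x : A → A by σ'_x(a) = 1∘ψ_x(a). Then each σ_a is a well-defined bijection of G and σ_{a∘b} = σ_a ∘ σ_b for all a,b ∈ A (so σ is a left action of the group (A,∘) on G); and each σ'_x is a well-defined bijection of A with σ'_{x·y} = σ'_x ∘ σ'_y for all x,y ∈ G (so σ' is a left action of the group (G,·) on A). -/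
import Mathlib


namespace PE

/-- `s` applied to components 1,2 of a triple. -/
def s12 {S : Type*} (s : S × S → S × S) : S × S × S → S × S × S :=
  fun p => ((s (p.1, p.2.1)).1, (s (p.1, p.2.1)).2, p.2.2)

/-- `s` applied to components 1,3 of a triple. -/
def s13 {S : Type*} (s : S × S → S × S) : S × S × S → S × S × S :=
  fun p => ((s (p.1, p.2.2)).1, p.2.1, (s (p.1, p.2.2)).2)

/-- `s` applied to components 2,3 of a triple. -/
def s23 {S : Type*} (s : S × S → S × S) : S × S × S → S × S × S :=
  fun p => (p.1, s (p.2.1, p.2.2))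

/-- `(S, s)` is a set-theoretic solution to the Pentagon Equation:
`s₂₃ ∘ s₁₃ ∘ s₁₂ = s₁₂ ∘ s₂₃`. -/
def IsPE {S : Type*} (s : S × S → S × S) : Prop :=
  s23 s ∘ s13 s ∘ s12 s = s12 s ∘ s23 s

/-- The induced binary operation `x · y`: the first component of `s (x, y)`. -/
def mul {S : Type*} (s : S × S → S × S) (x y : S) : S := (s (x, y)).1

/-- The map `θ_x`: `theta s x y = θ_x(y)` is the second component of `s (x, y)`. -/
def theta {S : Type*} (s : S × S → S × S) (x y : S) : S := (s (x, y)).2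

/-- The operation `x ∘ y`: the second component of `s⁻¹ (y, x)`. -/
def circ {S : Type*} (sinv : S × S → S × S) (x y : S) : S := (sinv (y, x)).2

/-- The map `ψ_x`: `psi sinv x y = ψ_x(y)` is the first component of `s⁻¹ (y, x)`. -/
def psi {S : Type*} (sinv : S × S → S × S) (x y : S) : S := (sinv (y, x)).1

section Generic

variable {S : Type*} (s sinv : S × S → S × S)

lemma pe_apply (hPE : IsPE s) (x y z : S) :
    (mul s (mul s x y) z,
      (mul s (theta s x y) (theta s (mul s x y) z),
        theta s (theta s x y) (theta s (mul s x y) z))) =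
    (mul s x (mul s y z), (theta s x (mul s y z), theta s y z)) :=
  congrFun hPE (x, y, z)

lemma gassoc (hPE : IsPE s) (x y z : S) :
    mul s (mul s x y) z = mul s x (mul s y z) :=
  congrArg (fun q => q.1) (pe_apply s hPE x y z)

lemma gpe2 (hPE : IsPE s) (x y z : S) :
    mul s (theta s x y) (theta s (mul s x y) z) = theta s x (mul s y z) :=
  congrArg (fun q => q.2.1) (pe_apply s hPE x y z)

lemma gpe3 (hPE : IsPE s) (x y z : S) :
    theta s (theta s x y) (theta s (mul s x y) z) = theta s y z :=
  congrArg (fun q => q.2.2) (pe_apply s hPE x y z)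

lemma ginv1a (h1 : ∀ p, sinv (s p) = p) (x y : S) :
    psi sinv (theta s x y) (mul s x y) = x :=
  congrArg (fun q => q.1) (h1 (x, y))

lemma ginv1b (h1 : ∀ p, sinv (s p) = p) (x y : S) :
    circ sinv (theta s x y) (mul s x y) = y :=
  congrArg (fun q => q.2) (h1 (x, y))

lemma ginv2a (h2 : ∀ p, s (sinv p) = p) (q P : S) :
    mul s (psi sinv q P) (circ sinv q P) = P :=
  congrArg (fun q => q.1) (h2 (P, q))

lemma ginv2b (h2 : ∀ p, s (sinv p) = p) (q P : S) :
    theta s (psi sinv q P) (circ sinv q P) = q :=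
  congrArg (fun q => q.2) (h2 (P, q))

lemma gconstr (h1 : ∀ p, sinv (s p) = p) (h2 : ∀ p, s (sinv p) = p) (hPE : IsPE s)
    (x y P : S) :
    sinv (P, mul s x y) =
      (psi sinv x (psi sinv y P),
        mul s (circ sinv x (psi sinv y P)) (circ sinv y P)) := by
  have e1 : mul s (psi sinv x (psi sinv y P))
      (mul s (circ sinv x (psi sinv y P)) (circ sinv y P)) = P := by
    rw [← gassoc s hPE, ginv2a s sinv h2, ginv2a s sinv h2]
  have e2 : theta s (psi sinv x (psi sinv y P))
      (mul s (circ sinv x (psi sinv y P)) (circ sinv y P)) = mul s x y := by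
    rw [← gpe2 s hPE, ginv2b s sinv h2, ginv2a s sinv h2, ginv2b s sinv h2]
  have e3 : s (psi sinv x (psi sinv y P),
      mul s (circ sinv x (psi sinv y P)) (circ sinv y P)) = (P, mul s x y) :=
    Prod.ext e1 e2
  rw [← e3, h1]

lemma gconstr_psi (h1 : ∀ p, sinv (s p) = p) (h2 : ∀ p, s (sinv p) = p) (hPE : IsPE s)
    (x y P : S) :
    psi sinv (mul s x y) P = psi sinv x (psi sinv y P) :=
  congrArg (fun q => q.1) (gconstr s sinv h1 h2 hPE x y P)

lemma gconstr_circ (h1 : ∀ p, sinv (s p) = p) (h2 : ∀ p, s (sinv p) = p) (hPE : IsPE s)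
    (x y P : S) :
    circ sinv (mul s x y) P = mul s (circ sinv x (psi sinv y P)) (circ sinv y P) :=
  congrArg (fun q => q.2) (gconstr s sinv h1 h2 hPE x y P)

end Generic

section Dual

variable {S : Type*}

/-- The dual map: `s̃ = τ ∘ sinv ∘ τ`. -/
def dualMap (f : S × S → S × S) : S × S → S × S :=
  fun q => ((f (q.2, q.1)).2, (f (q.2, q.1)).1)

lemma dual_inv {f g : S × S → S × S} (h : ∀ p, g (f p) = p) :
    ∀ p, dualMap g (dualMap f p) = p := by
  rintro ⟨a, b⟩
  show ((g (f (b, a))).2, (g (f (b, a))).1) = (a, b)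
  rw [h (b, a)]

lemma mul_dual (sinv : S × S → S × S) : mul (dualMap sinv) = circ sinv := rfl
lemma theta_dual (sinv : S × S → S × S) : theta (dualMap sinv) = psi sinv := rfl
lemma circ_dual (s : S × S → S × S) : circ (dualMap s) = mul s := rfl
lemma psi_dual (s : S × S → S × S) : psi (dualMap s) = theta s := rfl

variable (s sinv : S × S → S × S)

lemma t12f12 (h1 : ∀ p, sinv (s p) = p) : ∀ w, s12 sinv (s12 s w) = w := by
  rintro ⟨x, y, z⟩
  show ((sinv (s (x, y))).1, (sinv (s (x, y))).2, z) = (x, y, z)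
  rw [h1 (x, y)]

lemma f12t12 (h2 : ∀ p, s (sinv p) = p) : ∀ w, s12 s (s12 sinv w) = w := by
  rintro ⟨x, y, z⟩
  show ((s (sinv (x, y))).1, (s (sinv (x, y))).2, z) = (x, y, z)
  rw [h2 (x, y)]

lemma t13f13 (h1 : ∀ p, sinv (s p) = p) : ∀ w, s13 sinv (s13 s w) = w := by
  rintro ⟨x, y, z⟩
  show ((sinv (s (x, z))).1, y, (sinv (s (x, z))).2) = (x, y, z)
  rw [h1 (x, z)]

lemma t23f23 (h1 : ∀ p, sinv (s p) = p) : ∀ w, s23 sinv (s23 s w) = w := by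
  rintro ⟨x, y, z⟩
  show (x, sinv (s (y, z))) = (x, y, z)
  rw [h1 (y, z)]

lemma f23t23 (h2 : ∀ p, s (sinv p) = p) : ∀ w, s23 s (s23 sinv w) = w := by
  rintro ⟨x, y, z⟩
  show (x, s (sinv (y, z))) = (x, y, z)
  rw [h2 (y, z)]

lemma keyT (h1 : ∀ p, sinv (s p) = p) (h2 : ∀ p, s (sinv p) = p) (hPE : IsPE s) :
    ∀ w, s12 sinv (s13 sinv (s23 sinv w)) = s23 sinv (s12 sinv w) := by
  intro w
  set u := s23 sinv (s12 sinv w) with hu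
  have hw : s12 s (s23 s u) = w := by
    rw [hu, f23t23 s sinv h2, f12t12 s sinv h2]
  have hpe : s12 s (s23 s u) = s23 s (s13 s (s12 s u)) := (congrFun hPE u).symm
  calc s12 sinv (s13 sinv (s23 sinv w))
      = s12 sinv (s13 sinv (s23 sinv (s23 s (s13 s (s12 s u))))) := by rw [← hpe, hw]
    _ = u := by rw [t23f23 s sinv h1, t13f13 s sinv h1, t12f12 s sinv h1]
    _ = s23 sinv (s12 sinv w) := hu

/-- reversal of triples -/
def rev : S × S × S → S × S × S := fun p => (p.2.2, p.2.1, p.1)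

lemma s12_dual_rev (q : S × S × S) : s12 (dualMap sinv) (rev q) = rev (s23 sinv q) := by
  obtain ⟨a, b, c⟩ := q; rfl

lemma s13_dual_rev (q : S × S × S) : s13 (dualMap sinv) (rev q) = rev (s13 sinv q) := by
  obtain ⟨a, b, c⟩ := q; rfl

lemma s23_dual_rev (q : S × S × S) : s23 (dualMap sinv) (rev q) = rev (s12 sinv q) := by
  obtain ⟨a, b, c⟩ := q; rfl

lemma dual_isPE (h1 : ∀ p, sinv (s p) = p) (h2 : ∀ p, s (sinv p) = p) (hPE : IsPE s) :
    IsPE (dualMap sinv) := by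
  funext w
  obtain ⟨x, y, z⟩ := w
  show s23 (dualMap sinv) (s13 (dualMap sinv) (s12 (dualMap sinv) (x, y, z)))
      = s12 (dualMap sinv) (s23 (dualMap sinv) (x, y, z))
  have h0 : (x, y, z) = rev (S := S) (z, y, x) := rfl
  rw [h0, s12_dual_rev, s13_dual_rev, s23_dual_rev, keyT s sinv h1 h2 hPE,
    ← s12_dual_rev, ← s23_dual_rev]

end Dual
section Main

/-- Bundled context for a finite bijective irretractable PE solution. -/
structure Ctx (S : Type*) where
  s : S × S → S × S
  sinv : S × S → S × S
  h1 : ∀ p, sinv (s p) = p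
  h2 : ∀ p, s (sinv p) = p
  hPE : IsPE s
  one : S
  hone : mul s one one = one
  honeθ : theta s one = id
  huniq : ∀ e, mul s e e = e → theta s e = id → e = one

namespace Ctx

variable {S : Type*} (C : Ctx S)

/- basic re-exports -/
lemma assoc (x y z : S) : mul C.s (mul C.s x y) z = mul C.s x (mul C.s y z) :=
  gassoc C.s C.hPE x y z

lemma pe2 (x y z : S) :
    mul C.s (theta C.s x y) (theta C.s (mul C.s x y) z) = theta C.s x (mul C.s y z) :=
  gpe2 C.s C.hPE x y z

lemma pe3 (x y z : S) :
    theta C.s (theta C.s x y) (theta C.s (mul C.s x y) z) = theta C.s y z :=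
  gpe3 C.s C.hPE x y z

lemma inv1a (x y : S) : psi C.sinv (theta C.s x y) (mul C.s x y) = x :=
  ginv1a C.s C.sinv C.h1 x y

lemma inv1b (x y : S) : circ C.sinv (theta C.s x y) (mul C.s x y) = y :=
  ginv1b C.s C.sinv C.h1 x y

lemma inv2a (q P : S) : mul C.s (psi C.sinv q P) (circ C.sinv q P) = P :=
  ginv2a C.s C.sinv C.h2 q P

lemma inv2b (q P : S) : theta C.s (psi C.sinv q P) (circ C.sinv q P) = q :=
  ginv2b C.s C.sinv C.h2 q P

lemma psi_mul (x y P : S) : psi C.sinv (mul C.s x y) P = psi C.sinv x (psi C.sinv y P) :=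
  gconstr_psi C.s C.sinv C.h1 C.h2 C.hPE x y P

lemma m1 (x y P : S) :
    circ C.sinv (mul C.s x y) P
      = mul C.s (circ C.sinv x (psi C.sinv y P)) (circ C.sinv y P) :=
  gconstr_circ C.s C.sinv C.h1 C.h2 C.hPE x y P

/- dual re-exports -/
lemma dPE : IsPE (dualMap C.sinv) := dual_isPE C.s C.sinv C.h1 C.h2 C.hPE

lemma dh1 : ∀ p, dualMap C.s (dualMap C.sinv p) = p := dual_inv C.h2
lemma dh2 : ∀ p, dualMap C.sinv (dualMap C.s p) = p := dual_inv C.h1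

lemma circ_assoc (x y z : S) :
    circ C.sinv (circ C.sinv x y) z = circ C.sinv x (circ C.sinv y z) :=
  gassoc (dualMap C.sinv) C.dPE x y z

lemma c2 (x y z : S) :
    circ C.sinv (psi C.sinv x y) (psi C.sinv (circ C.sinv x y) z)
      = psi C.sinv x (circ C.sinv y z) :=
  gpe2 (dualMap C.sinv) C.dPE x y z

lemma e6 (x y P : S) :
    theta C.s (circ C.sinv x y) P = theta C.s x (theta C.s y P) :=
  gconstr_psi (dualMap C.sinv) (dualMap C.s) C.dh1 C.dh2 C.dPE x y P

lemma m1star (x y P : S) :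
    mul C.s (circ C.sinv x y) P
      = circ C.sinv (mul C.s x (theta C.s y P)) (mul C.s y P) :=
  gconstr_circ (dualMap C.sinv) (dualMap C.s) C.dh1 C.dh2 C.dPE x y P

/- one-lemmas -/
lemma t_one (z : S) : theta C.s C.one z = z := congrFun C.honeθ z

lemma c_one_one : circ C.sinv C.one C.one = C.one := by
  have h := C.inv1b C.one C.one
  rwa [C.t_one, C.hone] at h

lemma p_one_one : psi C.sinv C.one C.one = C.one := by
  have h := C.inv1a C.one C.one
  rwa [C.t_one, C.hone] at h

end Ctx

/- powers -/
def pw {S : Type*} (C : Ctx S) (h : S) : ℕ → S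
  | 0 => h
  | n + 1 => mul C.s h (pw C h n)

namespace Ctx

variable {S : Type*} (C : Ctx S)

lemma pw_t {h : S} (hh : ∀ z, theta C.s h z = z) :
    ∀ n z, theta C.s (pw C h n) z = z := by
  intro n
  induction n with
  | zero => exact hh
  | succ n ih =>
    intro z
    have h3 := C.pe3 h (pw C h n) z
    rw [hh, ih, ih] at h3
    exact h3

lemma pw_add (h : S) (a b : ℕ) :
    pw C h (a + b + 1) = mul C.s (pw C h a) (pw C h b) := by
  induction a with
  | zero => rw [Nat.zero_add]; rfl
  | succ a ih =>
    rw [show a + 1 + b + 1 = (a + b + 1) + 1 from by omega]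
    show mul C.s h (pw C h (a + b + 1)) = _
    rw [ih, ← C.assoc]
    rfl

lemma pw_succ_r (h : S) (a : ℕ) : mul C.s (pw C h a) h = pw C h (a + 1) := by
  have := C.pw_add h a 0
  rw [show a + 0 + 1 = a + 1 from rfl] at this
  rw [this]
  rfl

lemma pw_shift {h : S} {i d : ℕ} (hij : pw C h i = pw C h (i + d)) :
    ∀ n, i ≤ n → pw C h n = pw C h (n + d) := by
  intro n hn
  induction n, hn using Nat.le_induction with
  | base => exact hij
  | succ n hn ih =>
    show mul C.s h (pw C h n) = pw C h (n + 1 + d)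
    rw [ih, show n + 1 + d = (n + d) + 1 from by omega]
    rfl

lemma pw_shift_mul {h : S} {i d : ℕ} (hij : pw C h i = pw C h (i + d)) :
    ∀ k n, i ≤ n → pw C h n = pw C h (n + k * d) := by
  intro k
  induction k with
  | zero => intro n _; rw [Nat.zero_mul, Nat.add_zero]
  | succ k ih =>
    intro n hn
    rw [ih n hn, C.pw_shift hij (n + k * d) (by omega),
      show n + k * d + d = n + (k + 1) * d from by ring]

lemma exists_pw_one [Finite S] {h : S} (hh : ∀ z, theta C.s h z = z) :
    ∃ M, pw C h M = C.one := by
  have key : ∀ i j, i < j → pw C h i = pw C h j → ∃ M, pw C h M = C.one := by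
    intro i j hlt heq
    set d := j - i with hd
    have hd1 : 1 ≤ d := by omega
    have hij : pw C h i = pw C h (i + d) := by rw [show i + d = j from by omega]; exact heq
    set M := (i + 1) * d - 1 with hM
    have hM1 : M + 1 = (i + 1) * d := by
      have : (i + 1) * 1 ≤ (i + 1) * d := Nat.mul_le_mul_left _ hd1
      omega
    have hMi : i ≤ M := by nlinarith
    have hidem : mul C.s (pw C h M) (pw C h M) = pw C h M := by
      rw [← C.pw_add h M M, show M + M + 1 = M + (M + 1) from by omega, hM1,
        show (i+1) * d = (i+1) * d from rfl]
      exact (C.pw_shift_mul hij (i+1) M hMi).symm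
    exact ⟨M, C.huniq _ hidem (funext fun z => C.pw_t hh M z)⟩
  obtain ⟨i, j, hne, heq⟩ := Finite.exists_ne_map_eq_of_infinite (pw C h)
  rcases Nat.lt_or_ge i j with hlt | hge
  · exact key i j hlt heq
  · exact key j i (by omega) heq.symm

end Ctx


namespace Ctx

variable {S : Type*} (C : Ctx S)

/-- L13: `1·x` has identity θ and is fixed by right multiplication by `1`. -/
lemma t_one_mul [Finite S] (x : S) :
    (∀ z, theta C.s (mul C.s C.one x) z = z) ∧
      mul C.s (mul C.s C.one x) C.one = mul C.s C.one x := by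
  set d := mul C.s C.one x with hdd
  set q := mul C.s x C.one with hqq
  set cc := mul C.s C.one q with hccc
  have hq1 : mul C.s q C.one = q := by rw [hqq, C.assoc, C.hone]
  have li_q : ∀ z, theta C.s (theta C.s q C.one) (theta C.s q z) = z := by
    intro z
    have h := C.pe3 q C.one z
    rwa [hq1, C.t_one] at h
  have tq_inj : Function.Injective (theta C.s q) := by
    intro z z' hzz
    have := congrArg (theta C.s (theta C.s q C.one)) hzz
    rwa [li_q, li_q] at this
  have hd1 : mul C.s d C.one = cc := by rw [hdd, hccc, C.assoc]
  have hcc1 : mul C.s cc C.one = cc := by rw [hccc, C.assoc, hq1]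
  have tcc_id : ∀ z, theta C.s cc z = z := by
    intro z
    have h := C.pe3 C.one q z
    rw [C.t_one, ← hccc] at h
    exact tq_inj h
  have tphi_id : ∀ z, theta C.s (theta C.s d C.one) z = z := by
    intro z
    have h := C.pe3 d C.one z
    rwa [hd1, tcc_id, C.t_one] at h
  have hc1 : ∀ z, mul C.s (theta C.s d C.one) z = theta C.s d (mul C.s C.one z) := by
    intro z
    have h := C.pe2 d C.one z
    rwa [hd1, tcc_id] at h
  have himg : ∃ v, theta C.s d v = C.one := by
    obtain ⟨M, hM⟩ := C.exists_pw_one tphi_id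
    cases M with
    | zero => exact ⟨C.one, by rw [show theta C.s d C.one = pw C (theta C.s d C.one) 0 from rfl, hM]⟩
    | succ M' =>
      refine ⟨mul C.s C.one (pw C (theta C.s d C.one) M'), ?_⟩
      rw [← hc1]
      exact hM
  have cdd : circ C.sinv d d = d := by
    have h := C.m1star C.one C.one x
    rw [C.c_one_one, C.t_one, ← hdd] at h
    exact h.symm
  have td_idem : ∀ z, theta C.s d (theta C.s d z) = theta C.s d z := by
    intro z
    have h := C.e6 d d z
    rw [cdd] at h
    exact h.symm
  have td1 : theta C.s d C.one = C.one := by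
    obtain ⟨v, hv⟩ := himg
    rw [← hv, td_idem, hv]
  have pd : psi C.sinv C.one cc = d := by
    have h := C.inv1a d C.one
    rwa [td1, hd1] at h
  have pcc : psi C.sinv C.one cc = cc := by
    have h := C.inv1a cc C.one
    rwa [show theta C.s cc C.one = C.one from tcc_id C.one, hcc1] at h
  have hdcc : d = cc := by rw [← pd, pcc]
  have md1 : mul C.s d C.one = d := by rw [hd1, ← hdcc]
  refine ⟨?_, md1⟩
  intro z
  have h := C.pe3 d C.one z
  rwa [td1, md1, C.t_one, C.t_one] at h

/-- L15: `1·e = 1` for every `·`-idempotent `e`. -/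
lemma one_mul_idem [Finite S] {e : S} (he : mul C.s e e = e) :
    mul C.s C.one e = C.one := by
  set d := mul C.s C.one e with hdd
  have td := (C.t_one_mul e).1
  have hde : mul C.s d e = d := by rw [hdd, C.assoc, he]
  obtain ⟨M, hM⟩ := C.exists_pw_one td
  have claim : ∀ j, mul C.s (pw C d j) e = pw C d j := by
    intro j
    induction j with
    | zero => exact hde
    | succ j ih =>
      show mul C.s (mul C.s d (pw C d j)) e = mul C.s d (pw C d j)
      rw [C.assoc, ih]
  have h := claim M
  rwa [hM] at h

/-- common core for idempotents with `b·1 = b` -/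
lemma idem_core [Finite S] {b : S} (hb1 : mul C.s b C.one = b) (hbb : mul C.s b b = b) :
    (∀ z, theta C.s (theta C.s b C.one) (theta C.s b z) = z) ∧
      Function.Surjective (theta C.s b) ∧ theta C.s b b = C.one := by
  have li : ∀ z, theta C.s (theta C.s b C.one) (theta C.s b z) = z := by
    intro z
    have h := C.pe3 b C.one z
    rwa [hb1, C.t_one] at h
  have inj : Function.Injective (theta C.s b) := by
    intro z z' hzz
    have := congrArg (theta C.s (theta C.s b C.one)) hzz
    rwa [li, li] at this
  have surj : Function.Surjective (theta C.s b) :=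
    (Finite.injective_iff_surjective).mp inj
  refine ⟨li, surj, ?_⟩
  have tau_id : ∀ w, theta C.s (theta C.s b b) w = w := by
    intro w
    obtain ⟨z, hz⟩ := surj w
    have h := C.pe3 b b z
    rw [hbb] at h
    rwa [hz] at h
  have tau_idem : mul C.s (theta C.s b b) (theta C.s b b) = theta C.s b b := by
    have h := C.pe2 b b b
    rwa [hbb] at h
  exact C.huniq _ tau_idem (funext tau_id)

/-- L16 (γ-trick): `e·1 = e` for every `·`-idempotent `e`. -/
lemma idem_mul_one [Finite S] {e : S} (he : mul C.s e e = e) :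
    mul C.s e C.one = e := by
  have he1 : mul C.s C.one e = C.one := C.one_mul_idem he
  set b := mul C.s e C.one with hbdef
  have hb1 : mul C.s b C.one = b := by rw [hbdef, C.assoc, C.hone]
  have hbb : mul C.s b b = b := by
    rw [hbdef, C.assoc, ← C.assoc C.one e C.one, he1, C.hone]
  obtain ⟨li_b, surj_b, tau1⟩ := C.idem_core hb1 hbb
  have p1b : psi C.sinv C.one b = b := by
    have h := C.inv1a b b
    rwa [tau1, hbb] at h
  have heb : mul C.s e b = b := by rw [hbdef, ← C.assoc, he]
  have hbe : mul C.s b e = b := by rw [hbdef, C.assoc, he1]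
  have tgamma_id : ∀ w, theta C.s (theta C.s e b) w = w := by
    intro w
    obtain ⟨z, hz⟩ := surj_b w
    have h := C.pe3 e b z
    rw [heb] at h
    rwa [hz] at h
  have hdelta1 : mul C.s (theta C.s b e) C.one = C.one := by
    have h := C.pe2 b e b
    rwa [hbe, heb, tau1] at h
  have hfdelta : theta C.s (theta C.s b e) C.one = theta C.s e b := by
    have h := C.pe3 b e b
    rwa [hbe, tau1] at h
  have hcgamma : circ C.sinv (theta C.s e b) C.one = C.one := by
    have h := C.inv1b (theta C.s b e) C.one
    rwa [hfdelta, hdelta1] at h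
  have hgamma1 : theta C.s e b = C.one := by
    obtain ⟨K, hK⟩ := C.exists_pw_one tgamma_id
    cases K with
    | zero => exact hK
    | succ K' =>
      have h := C.inv1b (pw C (theta C.s e b) K') (theta C.s e b)
      rw [C.pw_t tgamma_id K', C.pw_succ_r, hK] at h
      rw [← h, hcgamma]
  have h := C.inv1a e b
  rw [heb, hgamma1, p1b] at h
  rw [← h, hbdef]
/-! A-facts for idempotents -/

lemma tee [Finite S] {e : S} (he : mul C.s e e = e) : theta C.s e e = C.one :=
  (C.idem_core (C.idem_mul_one he) he).2.2

lemma p_one_idem [Finite S] {e : S} (he : mul C.s e e = e) :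
    psi C.sinv C.one e = e := by
  have h := C.inv1a e e
  rwa [C.tee he, he] at h

lemma c_one_idem [Finite S] {e : S} (he : mul C.s e e = e) :
    circ C.sinv C.one e = e := by
  have h := C.inv1b e e
  rwa [C.tee he, he] at h

lemma fe_idem [Finite S] {e : S} (he : mul C.s e e = e) :
    mul C.s (theta C.s e C.one) (theta C.s e C.one) = theta C.s e C.one := by
  have h := C.pe2 e C.one C.one
  rwa [C.idem_mul_one he, C.hone] at h

lemma te_li [Finite S] {e : S} (he : mul C.s e e = e) :
    ∀ z, theta C.s (theta C.s e C.one) (theta C.s e z) = z :=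
  (C.idem_core (C.idem_mul_one he) he).1

lemma te_ri [Finite S] {e : S} (he : mul C.s e e = e) :
    ∀ z, theta C.s e (theta C.s (theta C.s e C.one) z) = z := by
  intro z
  obtain ⟨w, hw⟩ := (C.idem_core (C.idem_mul_one he) he).2.1 z
  rw [← hw, C.te_li he w]

/-- Lemma K. -/
lemma lemK [Finite S] {e : S} (he : mul C.s e e = e) (z : S) :
    mul C.s C.one (theta C.s e (mul C.s C.one z)) = mul C.s C.one (theta C.s e z) := by
  have h2 := C.pe2 e C.one z
  rw [C.idem_mul_one he] at h2
  rw [← h2, ← C.assoc, C.one_mul_idem (C.fe_idem he)]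

/-! G-facts: elements of the form `1·w` -/

lemma g_one_mul (w : S) :
    mul C.s C.one (mul C.s C.one w) = mul C.s C.one w := by
  rw [← C.assoc, C.hone]

lemma g_c_one [Finite S] (w : S) :
    circ C.sinv (mul C.s C.one w) C.one = mul C.s C.one w := by
  set x := mul C.s C.one w with hx
  obtain ⟨M, hM⟩ := C.exists_pw_one (C.t_one_mul w).1
  cases M with
  | zero =>
    have hx1 : x = C.one := hM
    rw [hx1]; exact C.c_one_one
  | succ M' =>
    have h := C.inv1b (pw C x M') x
    rwa [C.pw_t (C.t_one_mul w).1 M', C.pw_succ_r, hM] at h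

lemma g_c1x [Finite S] (w : S) :
    circ C.sinv C.one (mul C.s C.one w) = C.one := by
  have h := C.inv1b (mul C.s C.one w) C.one
  rwa [(C.t_one_mul w).1, (C.t_one_mul w).2] at h

lemma g_p1x [Finite S] (w : S) :
    psi C.sinv C.one (mul C.s C.one w) = mul C.s C.one w := by
  have h := C.inv1a (mul C.s C.one w) C.one
  rwa [(C.t_one_mul w).1, (C.t_one_mul w).2] at h

lemma g_inv [Finite S] (w : S) :
    ∃ w', mul C.s (mul C.s C.one w') (mul C.s C.one w) = C.one ∧
      mul C.s (mul C.s C.one w) (mul C.s C.one w') = C.one := by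
  obtain ⟨M, hM⟩ := C.exists_pw_one (C.t_one_mul w).1
  cases M with
  | zero =>
    have hx1 : mul C.s C.one w = C.one := hM
    refine ⟨C.one, ?_, ?_⟩ <;> rw [hx1, C.hone, C.hone]
  | succ M' =>
    refine ⟨pw C (mul C.s C.one w) M', ?_, ?_⟩
    · rw [C.assoc, C.pw_succ_r, hM, C.hone]
    · rw [← C.assoc (mul C.s C.one w), (C.t_one_mul w).2]
      exact hM
  
/-- G27: `1 ∘ ψ_x(1) = 1` for `x ∈ G`. -/
lemma g27 [Finite S] (w : S) :
    circ C.sinv C.one (psi C.sinv (mul C.s C.one w) C.one) = C.one := by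
  set x := mul C.s C.one w with hx
  have hgx : mul C.s (psi C.sinv x C.one) x = C.one := by
    have h := C.inv2a x C.one
    rwa [C.g_c_one w] at h
  obtain ⟨M, hM⟩ := C.exists_pw_one (C.t_one_mul w).1
  cases M with
  | zero =>
    have hx1 : x = C.one := hM
    rw [hx1, C.p_one_one, C.c_one_one]
  | succ M' =>
    set g := psi C.sinv x C.one with hg
    have hMx : mul C.s x (pw C x M') = C.one := hM
    have hgr : mul C.s g C.one = mul C.s C.one (pw C x M') := by
      conv_lhs => rw [← hMx]
      rw [← C.assoc, hgx]
    have tx' : ∀ z, theta C.s (mul C.s C.one (pw C x M')) z = z := (C.t_one_mul _).1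
    have tphi : ∀ z, theta C.s (theta C.s g C.one) z = z := by
      intro z
      have h := C.pe3 g C.one z
      rwa [hgr, tx', C.t_one] at h
    have hf1 : ∀ z, mul C.s (theta C.s g C.one) z = theta C.s g (mul C.s C.one z) := by
      intro z
      have h := C.pe2 g C.one z
      rwa [hgr, tx'] at h
    have himg : ∃ v, theta C.s g v = C.one := by
      obtain ⟨K, hK⟩ := C.exists_pw_one tphi
      cases K with
      | zero => exact ⟨C.one, hK⟩
      | succ K' =>
        refine ⟨mul C.s C.one (pw C (theta C.s g C.one) K'), ?_⟩
        rw [← hf1]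
        exact hK
    have cgg : circ C.sinv g g = g := by
      have h := C.c2 x C.one C.one
      rwa [C.g_c_one w, C.c_one_one, ← hg] at h
    have tg_idem : ∀ z, theta C.s g (theta C.s g z) = theta C.s g z := by
      intro z
      have h := C.e6 g g z
      rw [cgg] at h
      exact h.symm
    have tg1 : theta C.s g C.one = C.one := by
      obtain ⟨v, hv⟩ := himg
      rw [← hv, tg_idem, hv]
    have hpp : psi C.sinv C.one (mul C.s C.one (pw C x M')) = g := by
      have h := C.inv1a g C.one
      rwa [tg1, hgr] at h
    have : g = mul C.s C.one (pw C x M') := by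
      rw [← hpp, C.g_p1x]
    rw [this]
    exact C.g_c1x _

/-- G28 = Lemma K'. -/
lemma lemK' [Finite S] (w v : S) :
    circ C.sinv C.one (psi C.sinv (mul C.s C.one w) (circ C.sinv C.one v)) =
      circ C.sinv C.one (psi C.sinv (mul C.s C.one w) v) := by
  set x := mul C.s C.one w with hx
  have h9 := C.c2 x C.one v
  rw [C.g_c_one w] at h9
  rw [← h9, ← C.circ_assoc, C.g27 w]

/-- MapsTo for σ′. -/
lemma sig'_mem [Finite S] (w e : S) :
    mul C.s (circ C.sinv C.one (psi C.sinv (mul C.s C.one w) e))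
        (circ C.sinv C.one (psi C.sinv (mul C.s C.one w) e)) =
      circ C.sinv C.one (psi C.sinv (mul C.s C.one w) e) := by
  set x := mul C.s C.one w with hx
  have hp : psi C.sinv C.one (psi C.sinv x e) = psi C.sinv x e := by
    rw [← C.psi_mul, C.g_one_mul]
  have h := C.m1 C.one C.one (psi C.sinv x e)
  rw [C.hone, hp] at h
  exact h.symm
end Ctx
end Main

/-- for a finite bijective irretractable solution, with `A` the set of
`·`-idempotents (a group under `∘`) and `G = 1·S` (a group under `·`), the maps
`σ_a(x) = 1·θ_a(x)` are bijections of `G` forming a left action of `(A,∘)` on `G`,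
and the maps `σ'_x(a) = 1∘ψ_x(a)` are bijections of `A` forming a left action of
`(G,·)` on `A`. -/
theorem statement14 {S : Type*} [Finite S] [Nonempty S] (s : S × S → S × S)
    (hPE : IsPE s) (hbij : Function.Bijective s)
    (sinv : S × S → S × S) (hinv₁ : ∀ p, sinv (s p) = p) (hinv₂ : ∀ p, s (sinv p) = p)
    (one : S) (hone : mul s one one = one) (honeθ : theta s one = id)
    (huniq : ∀ e : S, mul s e e = e → theta s e = id → e = one) :
    let A : Set S := {e | mul s e e = e}
    let G : Set S := Set.range (mul s one)
    let σ : S → S → S := fun a x => mul s one (theta s a x)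
    let σ' : S → S → S := fun x a => circ sinv one (psi sinv x a)
    (∀ a ∈ A, Set.BijOn (σ a) G G) ∧
    (∀ a ∈ A, ∀ b ∈ A, ∀ x ∈ G, σ (circ sinv a b) x = σ a (σ b x)) ∧
    (∀ x ∈ G, Set.BijOn (σ' x) A A) ∧
    (∀ x ∈ G, ∀ y ∈ G, ∀ a ∈ A, σ' (mul s x y) a = σ' x (σ' y a)) := by
  intro A G σ σ'
  let C : Ctx S := ⟨s, sinv, hinv₁, hinv₂, hPE, one, hone, honeθ, huniq⟩
  refine ⟨?_, ?_, ?_, ?_⟩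
  · -- Goal 1
    intro a ha
    have ha' : mul s a a = a := ha
    have hfa : mul s (theta s a one) (theta s a one) = theta s a one := C.fe_idem ha'
    have maps1 : Set.MapsTo (σ a) G G := fun x _ => ⟨theta s a x, rfl⟩
    have maps2 : Set.MapsTo (σ (theta s a one)) G G :=
      fun x _ => ⟨theta s (theta s a one) x, rfl⟩
    have left : ∀ x ∈ G, σ (theta s a one) (σ a x) = x := by
      intro x hx
      obtain ⟨w, hw⟩ := hx
      have e1 : mul s one (theta s (theta s a one) (mul s one (theta s a x)))
          = mul s one (theta s (theta s a one) (theta s a x)) := C.lemK hfa (theta s a x)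
      have e2 : theta s (theta s a one) (theta s a x) = x := C.te_li ha' x
      have e3 : mul s one (mul s one w) = mul s one w := C.g_one_mul w
      rw [hw] at e3
      show mul s one (theta s (theta s a one) (mul s one (theta s a x))) = x
      rw [e1, e2, e3]
    have right : ∀ x ∈ G, σ a (σ (theta s a one) x) = x := by
      intro x hx
      obtain ⟨w, hw⟩ := hx
      have e1 : mul s one (theta s a (mul s one (theta s (theta s a one) x)))
          = mul s one (theta s a (theta s (theta s a one) x)) :=
        C.lemK ha' (theta s (theta s a one) x)
      have e2 : theta s a (theta s (theta s a one) x) = x := C.te_ri ha' x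
      have e3 : mul s one (mul s one w) = mul s one w := C.g_one_mul w
      rw [hw] at e3
      show mul s one (theta s a (mul s one (theta s (theta s a one) x))) = x
      rw [e1, e2, e3]
    exact Set.InvOn.bijOn ⟨left, right⟩ maps1 maps2
  · -- Goal 2
    intro a ha b _ x _
    have ha' : mul s a a = a := ha
    have e1 : theta s (circ sinv a b) x = theta s a (theta s b x) := C.e6 a b x
    have e2 : mul s one (theta s a (mul s one (theta s b x)))
        = mul s one (theta s a (theta s b x)) := C.lemK ha' (theta s b x)
    show mul s one (theta s (circ sinv a b) x)
        = mul s one (theta s a (mul s one (theta s b x)))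
    rw [e1, e2]
  · -- Goal 3
    intro x hx
    obtain ⟨w, hw⟩ := hx
    subst hw
    obtain ⟨w', hi1, hi2⟩ := C.g_inv w
    have maps1 : Set.MapsTo (σ' (mul s one w)) A A := fun e _ => C.sig'_mem w e
    have maps2 : Set.MapsTo (σ' (mul s one w')) A A := fun e _ => C.sig'_mem w' e
    have left : ∀ e ∈ A, σ' (mul s one w') (σ' (mul s one w) e) = e := by
      intro e he
      have he' : mul s e e = e := he
      have k' : circ sinv one (psi sinv (mul s one w')
            (circ sinv one (psi sinv (mul s one w) e)))
          = circ sinv one (psi sinv (mul s one w') (psi sinv (mul s one w) e)) :=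
        C.lemK' w' (psi sinv (mul s one w) e)
      have pm : psi sinv (mul s (mul s one w') (mul s one w)) e
          = psi sinv (mul s one w') (psi sinv (mul s one w) e) := C.psi_mul _ _ e
      rw [hi1] at pm
      have p1 : psi sinv one e = e := C.p_one_idem he'
      have c1 : circ sinv one e = e := C.c_one_idem he'
      show circ sinv one (psi sinv (mul s one w')
          (circ sinv one (psi sinv (mul s one w) e))) = e
      rw [k', ← pm, p1, c1]
    have right : ∀ e ∈ A, σ' (mul s one w) (σ' (mul s one w') e) = e := by
      intro e he
      have he' : mul s e e = e := he
      have k' : circ sinv one (psi sinv (mul s one w)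
            (circ sinv one (psi sinv (mul s one w') e)))
          = circ sinv one (psi sinv (mul s one w) (psi sinv (mul s one w') e)) :=
        C.lemK' w (psi sinv (mul s one w') e)
      have pm : psi sinv (mul s (mul s one w) (mul s one w')) e
          = psi sinv (mul s one w) (psi sinv (mul s one w') e) := C.psi_mul _ _ e
      rw [hi2] at pm
      have p1 : psi sinv one e = e := C.p_one_idem he'
      have c1 : circ sinv one e = e := C.c_one_idem he'
      show circ sinv one (psi sinv (mul s one w)
          (circ sinv one (psi sinv (mul s one w') e))) = e
      rw [k', ← pm, p1, c1]
    exact Set.InvOn.bijOn ⟨left, right⟩ maps1 maps2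
  · -- Goal 4
    intro x hx y _ a _
    obtain ⟨w, hw⟩ := hx
    subst hw
    have pm : psi sinv (mul s (mul s one w) y) a
        = psi sinv (mul s one w) (psi sinv y a) := C.psi_mul _ _ a
    have k' : circ sinv one (psi sinv (mul s one w) (circ sinv one (psi sinv y a)))
        = circ sinv one (psi sinv (mul s one w) (psi sinv y a)) :=
      C.lemK' w (psi sinv y a)
    show circ sinv one (psi sinv (mul s (mul s one w) y) a)
        = circ sinv one (psi sinv (mul s one w) (circ sinv one (psi sinv y a)))
    rw [pm, k']


end PE
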